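/- arXiv:1506.08280 — 3 statements merged into one kernel-verified Lean document; each statement's English description precedes it below -/
import Mathlib

section
/- (Persistence of surjectivity from large scale to small scale.) Suppose f : X → Y is a visual large scale Lipschitz function between proper δ-hyperbolic geodesic spaces. If f is coarsely surjective, then the induced map tilde f : ∂X → ∂Y between sequential boundaries is surjective. -/
/-! Pick `x n` with `f (x n)` within `S` of `y n`; as `f` is large scale Lipschitz, `x n → ∞`.
Geodesics from `a` to `x n` meet the sphere of radius `m` inside the compact ball `B(a, m)`, so
along a subsequence these crossing points converge for every integer `m`. By thinness of triangles
the subsequence then converges at infinity, by visuality so do its images, and those stay within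
`S` of `y`, hence represent the same boundary point. -/

open Filter Metric Set

noncomputable section

namespace Gromov

variable {X : Type*} [MetricSpace X] {Y : Type*} [MetricSpace Y]

/-- The Gromov product `(x,y)_a = (d(x,a)+d(y,a)-d(x,y))/2`. -/
def gp (a x y : X) : ℝ := (dist x a + dist y a - dist x y) / 2

/-- Gromov `δ`-hyperbolicity via the `δ/4`-inequality. -/
def IsDeltaHyperbolic (X : Type*) [MetricSpace X] (δ : ℝ) : Prop :=
  ∀ x y z w : X, gp w x y ≥ min (gp w x z) (gp w z y) - δ / 4

/-- `γ` is a geodesic starting at `x`, parametrized by arclength on `[0, M]`. -/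
def IsGeodesicOn (γ : ℝ → X) (x : X) (M : ℝ) : Prop :=
  γ 0 = x ∧ ∀ s ∈ Icc (0:ℝ) M, ∀ t ∈ Icc (0:ℝ) M, dist (γ s) (γ t) = |s - t|

/-- Every two points are joined by a geodesic. -/
def IsGeodesicSpace (X : Type*) [MetricSpace X] : Prop :=
  ∀ x y : X, ∃ γ : ℝ → X, IsGeodesicOn γ x (dist x y) ∧ γ (dist x y) = y

/-- An infinite geodesic ray emanating from `x`. -/
def IsRay (γ : ℝ → X) (x : X) : Prop :=
  γ 0 = x ∧ ∀ s ∈ Ici (0:ℝ), ∀ t ∈ Ici (0:ℝ), dist (γ s) (γ t) = |s - t|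

/-- `f` is `(l, μ)`-large scale Lipschitz. -/
def IsLSL (f : X → Y) (l μ : ℝ) : Prop :=
  ∀ x y : X, dist (f x) (f y) ≤ l * dist x y + μ

/-- `f` is large scale Lipschitz. -/
def LSL (f : X → Y) : Prop := ∃ l μ : ℝ, 0 < l ∧ 0 < μ ∧ IsLSL f l μ

/-- The `(l2, μ2)`-radial lower bound condition with respect to `x₀`:
on every finite geodesic emanating from `x₀`, `l2·d(x,y) - μ2 ≤ d(f(x),f(y))`. -/
def IsRadialWith (f : X → Y) (x₀ : X) (l2 μ2 : ℝ) : Prop :=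
  ∀ M, 0 ≤ M → ∀ γ : ℝ → X, IsGeodesicOn γ x₀ M →
    ∀ s ∈ Icc (0:ℝ) M, ∀ t ∈ Icc (0:ℝ) M,
      l2 * dist (γ s) (γ t) - μ2 ≤ dist (f (γ s)) (f (γ t))

/-- `f` is a radial function with respect to `x₀`. -/
def Radial (f : X → Y) (x₀ : X) : Prop :=
  LSL f ∧ ∃ l2 μ2 : ℝ, 0 < l2 ∧ 0 < μ2 ∧ IsRadialWith f x₀ l2 μ2

/-- `f` is visual: for some basepoint `a`, `(x_n,y_n)_a → ∞` implies
`(f(x_n),f(y_n))_{f(a)} → ∞`. -/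
def VisualFn (f : X → Y) : Prop :=
  ∃ a : X, ∀ x y : ℕ → X,
    Tendsto (fun n => gp a (x n) (y n)) atTop atTop →
    Tendsto (fun n => gp (f a) (f (x n)) (f (y n))) atTop atTop

/-- `liminf_{i,j→∞} (x_i,x_j)_a = ∞`: the sequence converges to infinity. -/
def ConvSeq (a : X) (x : ℕ → X) : Prop :=
  Tendsto (fun p : ℕ × ℕ => gp a (x p.1) (x p.2)) atTop atTop

/-- `liminf_{i,j→∞} (x_i,y_j)_a = ∞`: the two sequences are equivalent. -/
def SeqEquiv (a : X) (x y : ℕ → X) : Prop :=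
  Tendsto (fun p : ℕ × ℕ => gp a (x p.1) (y p.2)) atTop atTop

def BSeq (a : X) : Type _ := {x : ℕ → X // ConvSeq a x}

/-- The sequential boundary `∂X` with basepoint `a`. -/
def Boundary (a : X) : Type _ := Quot (fun x y : BSeq a => SeqEquiv a x.1 y.1)

/-- The boundary point represented by a sequence. -/
def bpt (a : X) (x : ℕ → X) (hx : ConvSeq a x) : Boundary a :=
  Quot.mk _ ⟨x, hx⟩

/-- `liminf_{i,j→∞} (x_i,y_j)_a` as an extended real. -/
def gpSeqs (a : X) (x y : ℕ → X) : EReal :=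
  liminf (fun p : ℕ × ℕ => ((gp a (x p.1) (y p.2)) : EReal)) atTop

/-- The basic neighborhood `U(p,r)` in the sequential boundary. -/
def U (a : X) (p : Boundary a) (r : ℝ) : Set (Boundary a) :=
  {q | ∃ (x y : ℕ → X) (hx : ConvSeq a x) (hy : ConvSeq a y),
    bpt a x hx = p ∧ bpt a y hy = q ∧ (r : EReal) ≤ gpSeqs a x y}

instance (a : X) : TopologicalSpace (Boundary a) :=
  TopologicalSpace.generateFrom {s | ∃ p r, 0 < r ∧ s = U a p r}

/-- The union `X ∪ ∂X`. -/
def Comp (a : X) : Type _ := X ⊕ Boundary a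

def Comp.inl {a : X} (x : X) : Comp a := Sum.inl x
def Comp.inr {a : X} (p : Boundary a) : Comp a := Sum.inr p

/-- The extension of `U(p,r)` to `X ∪ ∂X`. -/
def UFull (a : X) (p : Boundary a) (r : ℝ) : Set (Comp a) :=
  {z : X ⊕ Boundary a | Sum.elim
    (fun x : X => ∃ (s : ℕ → X) (hs : ConvSeq a s), bpt a s hs = p ∧
      (r : EReal) ≤ liminf (fun i : ℕ => ((gp a (s i) x) : EReal)) atTop)
    (fun q : Boundary a => q ∈ U a p r) z}

instance (a : X) : TopologicalSpace (Comp a) :=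
  TopologicalSpace.generateFrom
    ({s | ∃ u : Set X, IsOpen u ∧ s = Comp.inl '' u} ∪
     {s | ∃ p r, 0 < r ∧ s = UFull a p r})

/-- The Gromov product of two boundary points:
`(p,q)_a = inf liminf_{i→∞} (x_i,y_i)_a` over representatives. -/
def gpBoundary (a : X) (p q : Boundary a) : EReal :=
  sInf {e : EReal | ∃ (x y : ℕ → X) (hx : ConvSeq a x) (hy : ConvSeq a y),
    bpt a x hx = p ∧ bpt a y hy = q ∧
    e = liminf (fun i : ℕ => ((gp a (x i) (y i)) : EReal)) atTop}

/-- `K^{-e}` for an extended real exponent `e` (with `K^{-∞} = 0`). -/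
def negPow (K : ℝ) (e : EReal) : ℝ :=
  if e = ⊤ then 0 else if e = ⊥ then 0 else Real.rpow K (-(e.toReal))

/-- `d` is a visual metric on `∂X` with parameters `K, C > 1`. -/
def IsVisualMetric (a : X) (d : Boundary a → Boundary a → ℝ) (K C : ℝ) : Prop :=
  1 < K ∧ 1 < C ∧ ∀ p q : Boundary a,
    negPow K (gpBoundary a p q) / C ≤ d p q ∧ d p q ≤ C * negPow K (gpBoundary a p q)

/-- A map between sets with distinguished distance functions is Hölder. -/
def IsHolder {A B : Type*} (dA : A → A → ℝ) (dB : B → B → ℝ) (g : A → B) : Prop :=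
  ∃ L α : ℝ, 0 < L ∧ 0 < α ∧ ∀ p q : A, dB (g p) (g q) ≤ L * Real.rpow (dA p q) α

/-- `(ξ₁,ξ₂)_a = liminf_{t→∞} (ξ₁(t),ξ₂(t))_a` for rays. -/
def gpRays (a : X) (ξ₁ ξ₂ : ℝ → X) : EReal :=
  liminf (fun t : ℝ => ((gp a (ξ₁ t) (ξ₂ t)) : EReal)) atTop

/-- The geodesic ray `ξ` represents the boundary point `p`. -/
def RayRepresents (a : X) (ξ : ℝ → X) (p : Boundary a) : Prop :=
  ∃ h : ConvSeq a (fun n : ℕ => ξ n), bpt a (fun n : ℕ => ξ n) h = p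

/-- `(x,ξ)_a = liminf_{n→∞} (x,ξ(n))_a`. -/
def gpPointRay (a x : X) (ξ : ℝ → X) : ℝ :=
  liminf (fun n : ℕ => gp a x (ξ n)) atTop

/-- `X` is a visual hyperbolic space with basepoint `a` and constant `D`. -/
def IsVisualSpace (a : X) (D : ℝ) : Prop :=
  ∀ x : X, ∃ ξ : ℝ → X, IsRay ξ a ∧ gpPointRay a x ξ > dist x a - D

/-- A maximal finite geodesic from `a`: it admits no proper geodesic extension. -/
def MaximalGeodesic (ζ : ℝ → X) (a : X) (M : ℝ) : Prop :=
  IsGeodesicOn ζ a M ∧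
    ¬ ∃ (M' : ℝ) (ζ' : ℝ → X), M < M' ∧ IsGeodesicOn ζ' a M' ∧
      ∀ t ∈ Icc (0:ℝ) M, ζ' t = ζ t

/-- `f : X → Y` is a radial extension with parameter `A` of `g : ∂X → ∂Y`
(`D` being the visuality constant of `X`). -/
def IsRadialExtension (a : X) (b : Y) (g : Boundary a → Boundary b)
    (A D : ℝ) (f : X → Y) : Prop :=
  f a = b ∧
  ∀ x : X, x ≠ a →
    ((∃ (ξ : ℝ → X) (t : ℝ), IsRay ξ a ∧ 0 ≤ t ∧ ξ t = x) →
      ∃ (ξ : ℝ → X) (t : ℝ) (η : ℝ → Y), IsRay ξ a ∧ 0 ≤ t ∧ ξ t = x ∧ IsRay η b ∧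
        (∃ p : Boundary a, RayRepresents a ξ p ∧ RayRepresents b η (g p)) ∧
        f x = η (A * t)) ∧
    ((¬ ∃ (ξ : ℝ → X) (t : ℝ), IsRay ξ a ∧ 0 ≤ t ∧ ξ t = x) →
      ∃ (M t : ℝ) (ζ ξ : ℝ → X) (η : ℝ → Y),
        MaximalGeodesic ζ a M ∧ t ∈ Icc (0:ℝ) M ∧ ζ t = x ∧
        IsRay ξ a ∧ gpPointRay a (ζ M) ξ > dist (ζ M) a - D ∧ IsRay η b ∧
        (∃ p : Boundary a, RayRepresents a ξ p ∧ RayRepresents b η (g p)) ∧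
        f x = η (A * t))

/-- `f` is coarsely surjective. -/
def CoarselySurjective (f : X → Y) : Prop :=
  ∃ S : ℝ, 0 < S ∧ ∀ y : Y, ∃ x : X, dist y (f x) ≤ S

/-- `f` is bornologous (coarse). -/
def Bornologous (f : X → Y) : Prop :=
  ∀ R : ℝ, 0 < R → ∃ S : ℝ, 0 < S ∧ ∀ x x' : X, dist x x' ≤ R → dist (f x) (f x') ≤ S

/-- `f` is a coarse embedding. -/
def CoarseEmbedding (f : X → Y) : Prop :=
  Bornologous f ∧
    ∀ R : ℝ, 0 < R → ∃ S : ℝ, 0 < S ∧ ∀ x x' : X, dist (f x) (f x') ≤ R → dist x x' ≤ S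

/-- `f` is coarsely `n`-to-1. -/
def CoarselyNto1 (f : X → Y) (n : ℕ) : Prop :=
  ∀ R : ℝ, 0 < R → ∃ S : ℝ, 0 < S ∧ ∀ A : Set Y, EMetric.diam A < ENNReal.ofReal R →
    ∃ B : Fin n → Set X, (f ⁻¹' A = ⋃ i, B i) ∧
      ∀ i, EMetric.diam (B i) < ENNReal.ofReal S

/-- `g : ∂X → ∂Y` is the boundary map induced by `f`, i.e. `g [(x_n)] = [(f(x_n))]`. -/
def InducedBoundaryMap (a : X) (f : X → Y) (g : Boundary a → Boundary (f a)) : Prop :=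
  ∀ (x : ℕ → X) (hx : ConvSeq a x) (hfx : ConvSeq (f a) (f ∘ x)),
    g (bpt a x hx) = bpt (f a) (f ∘ x) hfx

/-- `g` is (at most) `n`-to-1. -/
def NTo1 {A B : Type*} (g : A → B) (n : ℕ) : Prop :=
  ∀ b : B, ∃ s : Finset A, s.card ≤ n ∧ ∀ a : A, g a = b → a ∈ s

/-- Covering dimension at most `n`: every open cover admits an open refinement
of multiplicity at most `n+1`. -/
def CovDimLE (Z : Type*) [TopologicalSpace Z] (n : ℕ) : Prop :=
  ∀ 𝒰 : Set (Set Z), (∀ u ∈ 𝒰, IsOpen u) → ⋃₀ 𝒰 = univ →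
    ∃ 𝒱 : Set (Set Z), (∀ v ∈ 𝒱, IsOpen v) ∧ ⋃₀ 𝒱 = univ ∧
      (∀ v ∈ 𝒱, ∃ u ∈ 𝒰, v ⊆ u) ∧
      ∀ z : Z, {v ∈ 𝒱 | z ∈ v}.Finite ∧ {v ∈ 𝒱 | z ∈ v}.ncard ≤ n + 1

/-- `c_{f,n}(r)`: the supremum of numbers `B` such that there exist `n+1` points
with mutual Gromov products `< r` whose images have mutual Gromov products `≥ B`. -/
def cfn (a : X) (b : Y) (f : X → Y) (n : ℕ) (r : ℝ) : EReal :=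
  sSup {e : EReal | ∃ (B : ℝ) (x : Fin (n + 1) → X), e = (B : EReal) ∧
    (∀ i j, i ≠ j → gp a (x i) (x j) < r) ∧
    (∀ i j, i ≠ j → B ≤ gp b (f (x i)) (f (x j)))}

lemma gp_self (a x : X) : gp a x x = dist x a := by simp [gp]

lemma gp_comm (a x y : X) : gp a x y = gp a y x := by
  simp only [gp, dist_comm x y]; ring

lemma gp_le_gp_add_dist (a x x' y : X) : gp a x' y ≤ gp a x y + dist x x' := by
  have h₁ := abs_le.mp (abs_dist_sub_le x' x a)
  have h₂ := abs_le.mp (abs_dist_sub_le x x' y)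
  simp only [gp]; rw [dist_comm x x'] at h₂ ⊢; linarith [h₁.2, h₂.2]

lemma gp_le_gp_base_add_dist (a a' x y : X) : gp a' x y ≤ gp a x y + dist a a' := by
  have h₁ := abs_le.mp (abs_dist_sub_le a' a x)
  have h₂ := abs_le.mp (abs_dist_sub_le a' a y)
  simp only [gp]
  rw [dist_comm x a, dist_comm y a, dist_comm x a', dist_comm y a', dist_comm a a']
  linarith [h₁.2, h₂.2]

lemma ConvSeq.tendsto_dist {a : X} {x : ℕ → X} (hx : ConvSeq a x) :
    Tendsto (fun n => dist (x n) a) atTop atTop :=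
  (hx.comp tendsto_atTop_diagonal).congr fun n => gp_self a (x n)

lemma ConvSeq.seqEquiv_of_dist_le {b : Y} {y z : ℕ → Y} (hy : ConvSeq b y) {φ : ℕ → ℕ}
    (hφ : Tendsto φ atTop atTop) {S : ℝ} (hz : ∀ k, dist (y (φ k)) (z k) ≤ S) :
    SeqEquiv b z y := by
  have hsub : Tendsto (fun p : ℕ × ℕ => gp b (y (φ p.1)) (y p.2)) atTop atTop :=
    hy.comp (hφ.prod_atTop tendsto_id)
  refine tendsto_atTop_mono (fun p => ?_) (tendsto_atTop_add_const_right _ (-S) hsub)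
  linarith [gp_le_gp_add_dist b (z p.1) (y (φ p.1)) (y p.2), hz p.1,
    dist_comm (y (φ p.1)) (z p.1)]

section Geodesic

variable {γ : ℝ → X} {x₀ : X} {M t : ℝ}

lemma IsGeodesicOn.dist_eq (hγ : IsGeodesicOn γ x₀ M) (ht : t ∈ Icc 0 M) :
    dist (γ t) x₀ = t := by
  rw [← hγ.1, hγ.2 t ht 0 ⟨le_rfl, ht.1.trans ht.2⟩, sub_zero, abs_of_nonneg ht.1]

lemma IsGeodesicOn.gp_eq {x : X} (hγ : IsGeodesicOn γ x₀ M) (hx : γ M = x)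
    (ht : t ∈ Icc 0 M) : gp x₀ (γ t) x = t := by
  have hM : M ∈ Icc 0 M := ⟨ht.1.trans ht.2, le_rfl⟩
  have hγx : dist (γ t) x = M - t := by
    rw [← hx, hγ.2 t ht M hM, abs_of_nonpos (by linarith [ht.2]), neg_sub]
  rw [gp, hγ.dist_eq ht, ← hx, hγ.dist_eq hM, hx, hγx]
  ring

end Geodesic

lemma IsDeltaHyperbolic.sub_sub_le_gp {δ : ℝ} (hX : IsDeltaHyperbolic X δ) {a x x' z z' : X}
    {m : ℝ} (hz : m ≤ gp a z x) (hz' : m ≤ gp a z' x') :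
    m - dist z z' - δ / 4 ≤ gp a x x' := by
  have hx : m - dist z z' ≤ gp a x z := by
    linarith [gp_comm a z x, dist_nonneg (x := z) (y := z')]
  have hx' : m - dist z z' ≤ gp a z x' := by linarith [gp_le_gp_add_dist a z z' x']
  linarith [hX x x' z a, le_min hx hx']

theorem exists_strictMono_convSeq [ProperSpace X] {δ : ℝ} (hX : IsDeltaHyperbolic X δ)
    (hgX : IsGeodesicSpace X) (a : X) {x : ℕ → X}
    (hx : Tendsto (fun n => dist (x n) a) atTop atTop) :
    ∃ φ : ℕ → ℕ, StrictMono φ ∧ ConvSeq a (x ∘ φ) := by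
  choose γ hγ hγx using fun n => hgX a (x n)
  -- `p n m` is the point at distance `m` from `a` on the geodesic to `x n`, clamped at `x n`.
  set p : ℕ → ℕ → X := fun n m => γ n (min m (dist a (x n)))
  have hp_mem (n m : ℕ) : min (m : ℝ) (dist a (x n)) ∈ Icc 0 (dist a (x n)) :=
    ⟨le_min m.cast_nonneg dist_nonneg, min_le_right _ _⟩
  have hp_ball (n : ℕ) : p n ∈ univ.pi fun m : ℕ => closedBall a m := fun m _ => by
    rw [mem_closedBall, (hγ n).dist_eq (hp_mem n m)]
    exact min_le_left _ _
  -- Tychonoff: along a subsequence, the points at each integer distance from `a` converge.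
  obtain ⟨z, -, φ, hφ, hpz⟩ :=
    (isCompact_univ_pi fun m : ℕ => isCompact_closedBall a (m : ℝ)).tendsto_subseq hp_ball
  refine ⟨φ, hφ, tendsto_atTop.2 fun b => ?_⟩
  obtain ⟨m, hm⟩ := exists_nat_ge (b + 1 + δ / 4)
  have hnear : ∀ᶠ k in atTop,
      (m : ℝ) ≤ gp a (p (φ k) m) (x (φ k)) ∧ dist (p (φ k) m) (z m) < 1 / 2 := by
    refine ((hx.comp hφ.tendsto_atTop).eventually_ge_atTop (m : ℝ)).and
      (tendsto_nhds.1 (tendsto_pi_nhds.1 hpz m) _ one_half_pos) |>.mono ?_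
    intro k ⟨hk, hkz⟩
    refine ⟨?_, hkz⟩
    rw [(hγ _).gp_eq (hγx _) (hp_mem _ m), dist_comm]
    exact le_min le_rfl hk
  rw [← prod_atTop_atTop_eq]
  filter_upwards [hnear.prod_mk hnear] with ⟨k, l⟩ ⟨⟨hk, hkz⟩, hl, hlz⟩
  simp only [Function.comp_apply]
  linarith [hX.sub_sub_le_gp hk hl, dist_triangle_right (p (φ k) m) (p (φ l) m) (z m)]

lemma VisualFn.tendsto_gp {f : X → Y} (hvis : VisualFn f) (a : X) {x y : ℕ → X}
    (hxy : Tendsto (fun n => gp a (x n) (y n)) atTop atTop) :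
    Tendsto (fun n => gp (f a) (f (x n)) (f (y n))) atTop atTop := by
  obtain ⟨a', ha'⟩ := hvis
  have h' := ha' x y <| tendsto_atTop_mono
    (fun n => by linarith [gp_le_gp_base_add_dist a' a (x n) (y n)])
    (tendsto_atTop_add_const_right _ (-dist a' a) hxy)
  exact tendsto_atTop_mono
    (fun n => by linarith [gp_le_gp_base_add_dist (f a) (f a') (f (x n)) (f (y n))])
    (tendsto_atTop_add_const_right _ (-dist (f a) (f a')) h')

lemma VisualFn.convSeq_comp {f : X → Y} (hvis : VisualFn f) {a : X} {x : ℕ → X}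
    (hx : ConvSeq a x) : ConvSeq (f a) (f ∘ x) :=
  tendsto_iff_seq_tendsto.2 fun _ hq => hvis.tendsto_gp a (hx.comp hq)

lemma IsLSL.tendsto_dist_of_dist_le {f : X → Y} {l μ : ℝ} (hf : IsLSL f l μ) (hl : 0 < l)
    {a : X} {x : ℕ → X} {y : ℕ → Y} {S : ℝ} (hxy : ∀ n, dist (y n) (f (x n)) ≤ S)
    (hy : Tendsto (fun n => dist (y n) (f a)) atTop atTop) :
    Tendsto (fun n => dist (x n) a) atTop atTop := by
  have hbound (n : ℕ) : (dist (y n) (f a) + (-S - μ)) / l ≤ dist (x n) a := by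
    rw [div_le_iff₀ hl]
    linarith [dist_triangle (y n) (f (x n)) (f a), hf (x n) a, hxy n]
  exact tendsto_atTop_mono hbound
    ((tendsto_atTop_add_const_right _ _ hy).atTop_div_const hl)

theorem stmt12_general {X : Type*} [MetricSpace X] [ProperSpace X]
    {Y : Type*} [MetricSpace Y]
    (δ : ℝ) (hX : IsDeltaHyperbolic X δ)
    (hgX : IsGeodesicSpace X)
    (f : X → Y) (hf : LSL f) (hvis : VisualFn f) (a : X)
    (hsurj : CoarselySurjective f) :
    ∀ g : Boundary a → Boundary (f a), InducedBoundaryMap a f g →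
      Function.Surjective g := by
  intro g hg q
  obtain ⟨⟨y, hy⟩, rfl⟩ := Quot.exists_rep q
  obtain ⟨l, μ, hl, -, hlsl⟩ := hf
  obtain ⟨S, -, hS⟩ := hsurj
  choose x hx using fun n => hS (y n)
  obtain ⟨φ, hφ, hxφ⟩ :=
    exists_strictMono_convSeq hX hgX a (hlsl.tendsto_dist_of_dist_le hl hx hy.tendsto_dist)
  refine ⟨bpt a (x ∘ φ) hxφ, ?_⟩
  rw [hg _ hxφ (hvis.convSeq_comp hxφ)]
  exact Quot.sound <| hy.seqEquiv_of_dist_le hφ.tendsto_atTop fun k => hx (φ k)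

/-- persistence of surjectivity: if a visual large scale Lipschitz
function between proper δ-hyperbolic geodesic spaces is coarsely surjective,
then the induced map of sequential boundaries is surjective. -/
theorem stmt12 {X : Type*} [MetricSpace X] [ProperSpace X]
    {Y : Type*} [MetricSpace Y] [ProperSpace Y]
    (δ : ℝ) (hX : IsDeltaHyperbolic X δ) (hY : IsDeltaHyperbolic Y δ)
    (hgX : IsGeodesicSpace X) (hgY : IsGeodesicSpace Y)
    (f : X → Y) (hf : LSL f) (hvis : VisualFn f) (a : X)
    (hsurj : CoarselySurjective f) :
    ∀ g : Boundary a → Boundary (f a), InducedBoundaryMap a f g →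
      Function.Surjective g :=
  stmt12_general δ hX hgX f hf hvis a hsurj

end Gromov
end
end

section
/- A bornologous function f : X → Y between metric spaces is coarsely n-to-1 if and only if for every R > 0 there exists S > 0 such that whenever x₁,…,x_{n+1} is a sequence of n+1 points in X with d(x_i,x_j) > S for all i ≠ j, there exist two different indices k, m ≤ n+1 with d(f(x_k),f(x_m)) > R. -/
open Filter Metric Set

noncomputable section

/-!
If `n + 1` points are pairwise more than `S` apart while their images are pairwise within `R`,
the images form a set of diameter `< 2R`; its preimage is covered by `n` sets of diameter `< S`,
and by pigeonhole two of the points lie in the same one. Conversely, for `diam A < R` a maximal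
`S`-separated subset of `f ⁻¹' A` has at most `n` points (any `n + 1` of them would have two
images more than `R` apart), and the closed `S`-balls around its points cover `f ⁻¹' A` by at
most `n` sets of diameter `≤ 2S`.
-/

open scoped NNReal ENNReal

namespace Set

theorem exists_injective_fin_of_lt_encard {α : Type*} {s : Set α} {n : ℕ}
    (hs : (n : ℕ∞) < s.encard) : ∃ x : Fin (n + 1) → α, Function.Injective x ∧ ∀ i, x i ∈ s := by
  have hle : (univ : Set (Fin (n + 1))).encard ≤ s.encard := by
    rw [encard_univ, ENat.card_eq_coe_fintype_card, Fintype.card_fin]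
    exact Order.add_one_le_of_lt hs
  have : Nonempty α := by
    obtain ⟨a, -⟩ := nonempty_of_encard_ne_zero (ne_bot_of_gt hs)
    exact ⟨a⟩
  obtain ⟨x, hxs, hinj⟩ := finite_univ.exists_injOn_of_encard_le hle
  exact ⟨x, injOn_univ.1 hinj, fun i => hxs (mem_univ i)⟩

theorem nonempty_embedding_fin_of_encard_le {α : Type*} {s : Set α} {n : ℕ}
    (hs : s.encard ≤ n) : Nonempty (s ↪ Fin n) := by
  obtain ⟨hfin, hcard⟩ := encard_le_coe_iff_finite_ncard_le.1 hs
  have : Fintype s := hfin.fintype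
  refine Function.Embedding.nonempty_of_card_le ?_
  rwa [Fintype.card_fin, ← Nat.card_eq_fintype_card, Nat.card_coe_set_eq]

theorem exists_ne_mem_of_forall_mem_iUnion_fin {α : Type*} {n : ℕ} {B : Fin n → Set α}
    {x : Fin (n + 1) → α} (hx : ∀ i, x i ∈ ⋃ j, B j) :
    ∃ k m, k ≠ m ∧ ∃ j, x k ∈ B j ∧ x m ∈ B j := by
  choose g hg using fun i => mem_iUnion.1 (hx i)
  obtain ⟨k, m, hkm, hg_eq⟩ := Fintype.exists_ne_map_eq_of_card_lt g (by simp)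
  exact ⟨k, m, hkm, g k, hg k, hg_eq ▸ hg m⟩

end Set

namespace Metric

variable {X : Type*} [PseudoEMetricSpace X]

theorem packingNumber_le_of_forall_exists_edist_le {ε : ℝ≥0} {s : Set X} {n : ℕ}
    (h : ∀ x : Fin (n + 1) → X, (∀ i, x i ∈ s) → ∃ i j, i ≠ j ∧ edist (x i) (x j) ≤ ε) :
    packingNumber ε s ≤ n := by
  refine iSup₂_le fun C hCs => iSup_le fun hC => ?_
  by_contra! hlt
  obtain ⟨x, hx_inj, hxC⟩ := Set.exists_injective_fin_of_lt_encard hlt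
  obtain ⟨i, j, hij, hle⟩ := h x fun i => hCs (hxC i)
  exact (hC (hxC i) (hxC j) (hx_inj.ne hij)).not_ge hle

theorem IsCover.exists_fin_iUnion_eq {ε : ℝ≥0} {s N : Set X} {n : ℕ} (hN : IsCover ε s N)
    (hNn : N.encard ≤ n) : ∃ B : Fin n → Set X, s = ⋃ i, B i ∧ ∀ i, ediam (B i) ≤ 2 * ε := by
  obtain ⟨ι⟩ := Set.nonempty_embedding_fin_of_encard_le hNn
  refine ⟨fun i => {x ∈ s | ∃ y : N, ι y = i ∧ edist x y ≤ ε}, ?_, fun i => ?_⟩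
  · ext x
    simp only [Set.mem_iUnion]
    refine ⟨fun hx => ?_, fun ⟨_, hx, _⟩ => hx⟩
    obtain ⟨y, hyN, hxy⟩ := hN hx
    exact ⟨ι ⟨y, hyN⟩, hx, ⟨y, hyN⟩, by rfl, hxy⟩
  · refine ediam_le fun a ⟨_, y, hy, hay⟩ b ⟨_, z, hz, hbz⟩ => ?_
    obtain rfl : y = z := ι.injective (hy.trans hz.symm)
    calc edist a b ≤ edist a y + edist b y := edist_triangle_right a b y
      _ ≤ ε + ε := add_le_add hay hbz
      _ = 2 * ε := (two_mul _).symm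

end Metric

namespace Gromov

variable {X : Type*} [MetricSpace X] {Y : Type*} [MetricSpace Y]

theorem CoarselyNto1.exists_dist_image_gt {f : X → Y} {n : ℕ} (h : CoarselyNto1 f n) {R : ℝ}
    (hR : 0 < R) : ∃ S : ℝ, 0 < S ∧
      ∀ x : Fin (n + 1) → X, (∀ i j, i ≠ j → dist (x i) (x j) > S) →
        ∃ k m : Fin (n + 1), k ≠ m ∧ dist (f (x k)) (f (x m)) > R := by
  obtain ⟨S, hS, hcover⟩ := h (2 * R) (by linarith)
  refine ⟨S, hS, fun x hx => ?_⟩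
  by_contra! hclose
  have hdiam : ediam (range (f ∘ x)) ≤ ENNReal.ofReal R := by
    refine ediam_le ?_
    rintro _ ⟨i, rfl⟩ _ ⟨j, rfl⟩
    rw [edist_le_ofReal hR.le]
    rcases eq_or_ne i j with rfl | hij
    · simp [hR.le]
    · exact hclose i j hij
  obtain ⟨B, hB, hBdiam⟩ :=
    hcover _ (hdiam.trans_lt ((ENNReal.ofReal_lt_ofReal_iff (by linarith)).2 (by linarith)))
  obtain ⟨k, m, hkm, j, hk, hm⟩ := Set.exists_ne_mem_of_forall_mem_iUnion_fin (B := B) (x := x)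
    fun i => hB ▸ mem_range_self i
  have : dist (x k) (x m) < S :=
    edist_lt_ofReal.1 ((edist_le_ediam_of_mem hk hm).trans_lt (hBdiam j))
  exact (hx k m hkm).not_gt this

theorem coarselyNto1_of_exists_dist_image_gt {f : X → Y} {n : ℕ}
    (h : ∀ R : ℝ, 0 < R → ∃ S : ℝ, 0 < S ∧
      ∀ x : Fin (n + 1) → X, (∀ i j, i ≠ j → dist (x i) (x j) > S) →
        ∃ k m : Fin (n + 1), k ≠ m ∧ dist (f (x k)) (f (x m)) > R) :
    CoarselyNto1 f n := by
  intro R hR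
  obtain ⟨S, hS, hsep⟩ := h R hR
  refine ⟨3 * S, by linarith, fun A hA => ?_⟩
  have hpack : packingNumber S.toNNReal (f ⁻¹' A) ≤ n := by
    refine packingNumber_le_of_forall_exists_edist_le fun x hxA => ?_
    by_contra! hfar
    obtain ⟨k, m, hkm, hfkm⟩ := hsep x fun i j hij =>
      lt_of_not_ge fun hle => (hfar i j hij).not_ge ((edist_le_ofReal hS.le).2 hle)
    have : dist (f (x k)) (f (x m)) < R :=
      edist_lt_ofReal.1 ((edist_le_ediam_of_mem (s := A) (hxA k) (hxA m)).trans_lt hA)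
    linarith
  have hfin : packingNumber S.toNNReal (f ⁻¹' A) ≠ ⊤ := (hpack.trans_lt (ENat.natCast_lt_top n)).ne
  obtain ⟨B, hB, hBdiam⟩ := (isCover_maximalSeparatedSet hfin).exists_fin_iUnion_eq
    ((encard_maximalSeparatedSet hfin).trans_le hpack)
  refine ⟨B, hB, fun i => (hBdiam i).trans_lt ?_⟩
  calc 2 * (S.toNNReal : ℝ≥0∞) = ENNReal.ofReal (2 * S) := by
        rw [ENNReal.ofReal_mul zero_le_two, ENNReal.ofReal_ofNat]; rfl
    _ < ENNReal.ofReal (3 * S) := (ENNReal.ofReal_lt_ofReal_iff (by linarith)).2 (by linarith)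

theorem stmt15_general {X : Type*} [MetricSpace X] {Y : Type*} [MetricSpace Y]
    (f : X → Y) (n : ℕ) :
    CoarselyNto1 f n ↔
      ∀ R : ℝ, 0 < R → ∃ S : ℝ, 0 < S ∧
        ∀ x : Fin (n + 1) → X, (∀ i j, i ≠ j → dist (x i) (x j) > S) →
          ∃ k m : Fin (n + 1), k ≠ m ∧ dist (f (x k)) (f (x m)) > R :=
  ⟨fun h _ hR => h.exists_dist_image_gt hR, coarselyNto1_of_exists_dist_image_gt⟩

/-- a bornologous function is coarsely `n`-to-1 iff for every `R`
there is `S` such that among any `n+1` points with mutual distances `> S` two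
points have images at distance `> R`. -/
theorem stmt15 {X : Type*} [MetricSpace X] {Y : Type*} [MetricSpace Y]
    (f : X → Y) (n : ℕ) (hb : Bornologous f) :
    CoarselyNto1 f n ↔
      ∀ R : ℝ, 0 < R → ∃ S : ℝ, 0 < S ∧
        ∀ x : Fin (n + 1) → X, (∀ i j, i ≠ j → dist (x i) (x j) > S) →
          ∃ k m : Fin (n + 1), k ≠ m ∧ dist (f (x k)) (f (x m)) > R :=
  stmt15_general f n

end Gromov
end
end

section
/- Let C = ∏_{i=1}^∞ {0,1} be the Cantor set with metric d((x_i),(y_i)) = Σ_{i=1}^∞ |x_i − y_i|/2^i, and let f : C → [0,1] be given by f((a_i)) = Σ_{i=1}^∞ a_i/2^i. Then f is 1-Lipschitz, and for any three points x₁, x₂, x₃ ∈ C satisfying d(x_i,x_j) > r for all i ≠ j, there are two different indices k, m ≤ 3 with |f(x_k) − f(x_m)| ≥ r/2. -/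
open Filter Metric Set

noncomputable section

namespace Gromov

variable {X : Type*} [MetricSpace X] {Y : Type*} [MetricSpace Y]

/-- The metric on the Cantor set `C = ∏_{i=1}^∞ {0,1}`:
`d((x_i),(y_i)) = Σ_{i=1}^∞ |x_i − y_i|/2^i`. -/
noncomputable def cantorDist (x y : ℕ → Fin 2) : ℝ :=
  ∑' i : ℕ, |(x i : ℝ) - (y i : ℝ)| / 2 ^ (i + 1)

/-- The binary-expansion map `f((a_i)) = Σ_{i=1}^∞ a_i/2^i` from the Cantor set
to `[0,1]`. -/
noncomputable def binMap (x : ℕ → Fin 2) : ℝ :=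
  ∑' i : ℕ, (x i : ℝ) / 2 ^ (i + 1)

/-!
Both `f z - f w` and `d(z, w)` are dyadic sums `∑ dᵢ / 2^(i+1)` with `|dᵢ| ≤ 1`, which makes `f`
1-Lipschitz termwise. Given three points, let `m` be the first digit at which they do not all agree:
two of them, `p` and `q`, agree there and the third, `z`, does not. If `n > m` is the first digit at
which `p` and `q` differ, then `r < d(p, q) ≤ 2^(-n)`, while whichever of `p`, `q` has the same
digit at `n` as at `m` lies at `f`-distance at least `2^(-(n+1))` from `z`.
-/

def dyadicSum (d : ℕ → ℝ) : ℝ := ∑' i, d i / 2 ^ (i + 1)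

theorem summable_div_two_pow {d : ℕ → ℝ} {C : ℝ} (hd : ∀ i, |d i| ≤ C) :
    Summable fun i => d i / 2 ^ (i + 1) := by
  refine .of_norm_bounded (summable_geometric_two' C) fun i => ?_
  rw [Real.norm_eq_abs, abs_div, abs_of_pos (by positivity : (0:ℝ) < 2 ^ (i + 1)), pow_succ',
    ← div_div]
  gcongr
  exact hd i

theorem dyadicSum_one : dyadicSum (fun _ => 1) = 1 := by
  simp only [dyadicSum, pow_succ', ← div_div]
  exact tsum_geometric_two' 1

theorem dyadicSum_eq_of_eq_zero {d : ℕ → ℝ} {C : ℝ} {m : ℕ} (hd : ∀ i, |d i| ≤ C)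
    (h : ∀ i < m, d i = 0) : dyadicSum d = (1 / 2) ^ m * dyadicSum fun i => d (i + m) := by
  rw [dyadicSum, ← (summable_div_two_pow hd).sum_add_tsum_nat_add m,
    Finset.sum_eq_zero fun i hi => by rw [h i (Finset.mem_range.mp hi), zero_div], zero_add,
    dyadicSum, ← tsum_mul_left]
  congr 1 with i
  rw [add_right_comm, pow_add, one_div_pow]
  field_simp

theorem dyadicSum_add {d e : ℕ → ℝ} {C C' : ℝ} (hd : ∀ i, |d i| ≤ C) (he : ∀ i, |e i| ≤ C') :
    dyadicSum (fun i => d i + e i) = dyadicSum d + dyadicSum e := by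
  simp only [dyadicSum, add_div]
  exact (summable_div_two_pow hd).tsum_add (summable_div_two_pow he)

theorem dyadicSum_sub {d e : ℕ → ℝ} {C C' : ℝ} (hd : ∀ i, |d i| ≤ C) (he : ∀ i, |e i| ≤ C') :
    dyadicSum (fun i => d i - e i) = dyadicSum d - dyadicSum e := by
  simp only [dyadicSum, sub_div]
  exact (summable_div_two_pow hd).tsum_sub (summable_div_two_pow he)

theorem dyadicSum_neg (d : ℕ → ℝ) : dyadicSum (fun i => -d i) = -dyadicSum d := by
  simp only [dyadicSum, neg_div, tsum_neg]

theorem abs_dyadicSum_le {d : ℕ → ℝ} {C : ℝ} (hd : ∀ i, |d i| ≤ C) :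
    |dyadicSum d| ≤ dyadicSum fun i => |d i| := by
  have hs := (summable_div_two_pow (C := C) fun i => by simpa using hd i).norm
  simpa [dyadicSum, abs_div] using norm_tsum_le_tsum_norm hs

theorem dyadicSum_mono {d e : ℕ → ℝ} {C C' : ℝ} (hd : ∀ i, |d i| ≤ C) (he : ∀ i, |e i| ≤ C')
    (h : ∀ i, d i ≤ e i) : dyadicSum d ≤ dyadicSum e :=
  (summable_div_two_pow hd).tsum_le_tsum (fun i => by gcongr; exact h i) (summable_div_two_pow he)

theorem dyadicSum_le_one {d : ℕ → ℝ} (hd : ∀ i, |d i| ≤ 1) : dyadicSum d ≤ 1 :=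
  dyadicSum_one ▸ dyadicSum_mono hd (C' := 1) (fun _ => by simp) fun i => (abs_le.mp (hd i)).2

theorem dyadicSum_le_half_pow {d : ℕ → ℝ} {m : ℕ} (hd : ∀ i, |d i| ≤ 1) (h : ∀ i < m, d i = 0) :
    dyadicSum d ≤ (1 / 2) ^ m := by
  rw [dyadicSum_eq_of_eq_zero hd h]
  exact mul_le_of_le_one_right (by positivity) (dyadicSum_le_one fun i => hd _)

theorem half_pow_le_dyadicSum_of_head {d : ℕ → ℝ} {k : ℕ} (hd : ∀ i, |d i| ≤ 1) (h0 : d 0 = 1)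
    (hk : k ≠ 0) (hdk : 0 ≤ d k) : (1 / 2) ^ (k + 1) ≤ dyadicSum d := by
  have hd' : ∀ i, |d i + 1| ≤ 2 := fun i =>
    (abs_add_le _ _).trans (by rw [abs_one]; linarith [hd i])
  -- after adding 1 all terms are nonnegative, so the terms `0` and `k` bound the sum from below
  have hsum : 1 + (1 / 2) ^ (k + 1) ≤ dyadicSum fun i => d i + 1 :=
    calc 1 + (1 / 2) ^ (k + 1) ≤ ∑ i ∈ {0, k}, (d i + 1) / 2 ^ (i + 1) := by
          rw [Finset.sum_pair hk.symm, h0, one_div_pow]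
          gcongr
          · norm_num
          · linarith
      _ ≤ dyadicSum fun i => d i + 1 :=
          (summable_div_two_pow hd').sum_le_tsum _ fun i _ =>
            div_nonneg (by linarith [abs_le.mp (hd i)]) (by positivity)
  rw [dyadicSum_add hd (C' := 1) (fun _ => abs_one.le), dyadicSum_one] at hsum
  linarith

theorem half_pow_le_dyadicSum {d : ℕ → ℝ} {m n : ℕ} (hd : ∀ i, |d i| ≤ 1)
    (h : ∀ i < m, d i = 0) (hm : d m = 1) (hmn : m < n) (hn : 0 ≤ d n) :
    (1 / 2) ^ (n + 1) ≤ dyadicSum d := by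
  obtain ⟨k, rfl⟩ := Nat.exists_eq_add_of_lt hmn
  have hshift := half_pow_le_dyadicSum_of_head (d := fun i => d (i + m)) (k := k + 1)
    (fun i => hd _) (by simpa using hm) k.succ_ne_zero (by rwa [add_right_comm, add_comm k])
  rw [dyadicSum_eq_of_eq_zero hd h]
  calc (1 / 2 : ℝ) ^ (m + k + 1 + 1) = (1 / 2) ^ m * (1 / 2) ^ (k + 1 + 1) := by ring
    _ ≤ _ := by gcongr

theorem half_pow_le_abs_dyadicSum {d : ℕ → ℝ} {m n : ℕ} (hd : ∀ i, |d i| ≤ 1)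
    (h : ∀ i < m, d i = 0) (hm : |d m| = 1) (hmn : m < n) (hn : 0 ≤ d m * d n) :
    (1 / 2) ^ (n + 1) ≤ |dyadicSum d| := by
  rcases (abs_eq zero_le_one).mp hm with hm | hm
  · exact (half_pow_le_dyadicSum hd h hm hmn (by simpa [hm] using hn)).trans (le_abs_self _)
  · have hneg := half_pow_le_dyadicSum (d := fun i => -d i) (by simpa using hd)
      (by simpa using h) (by simp [hm]) hmn (by rw [hm] at hn; linarith)
    rw [dyadicSum_neg] at hneg
    exact hneg.trans (neg_le_abs _)

theorem abs_coe_le_one (a : Fin 2) : |(a : ℝ)| ≤ 1 := by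
  fin_cases a <;> norm_num

theorem abs_coe_sub_coe_le_one (a b : Fin 2) : |(a : ℝ) - b| ≤ 1 := by
  fin_cases a <;> fin_cases b <;> norm_num

theorem abs_coe_sub_coe_eq_one {a b : Fin 2} (h : a ≠ b) : |(a : ℝ) - b| = 1 := by
  fin_cases a <;> fin_cases b <;> simp_all

theorem coe_sub_coe_mul_nonneg {a b : Fin 2} (h : a ≠ b) (c : Fin 2) :
    0 ≤ ((a : ℝ) - b) * (c - b) := by
  fin_cases a <;> fin_cases b <;> fin_cases c <;> simp_all

theorem binMap_sub (x y : ℕ → Fin 2) :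
    binMap x - binMap y = dyadicSum fun i => (x i : ℝ) - y i :=
  (dyadicSum_sub (fun i => abs_coe_le_one (x i)) (fun i => abs_coe_le_one (y i))).symm

theorem abs_binMap_sub_le_cantorDist (x y : ℕ → Fin 2) :
    |binMap x - binMap y| ≤ cantorDist x y := by
  rw [binMap_sub]
  exact abs_dyadicSum_le fun i => abs_coe_sub_coe_le_one _ _

theorem cantorDist_le_half_pow {x y : ℕ → Fin 2} {n : ℕ} (h : ∀ i < n, x i = y i) :
    cantorDist x y ≤ (1 / 2) ^ n :=
  dyadicSum_le_half_pow (fun i => (abs_abs _).trans_le (abs_coe_sub_coe_le_one _ _))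
    fun i hi => by simp [h i hi]

theorem half_pow_le_abs_binMap_sub {z w : ℕ → Fin 2} {m n : ℕ} (h : ∀ i < m, z i = w i)
    (hm : z m ≠ w m) (hmn : m < n) (hn : w n = w m) :
    (1 / 2) ^ (n + 1) ≤ |binMap z - binMap w| := by
  rw [binMap_sub]
  refine half_pow_le_abs_dyadicSum (fun i => abs_coe_sub_coe_le_one _ _)
    (fun i hi => by simp [h i hi]) (abs_coe_sub_coe_eq_one hm) hmn ?_
  rw [hn]
  exact coe_sub_coe_mul_nonneg hm (z n)

theorem cantorDist_self (x : ℕ → Fin 2) : cantorDist x x = 0 := by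
  simp [cantorDist]

theorem le_abs_binMap_sub_or {r : ℝ} {p q z : ℕ → Fin 2} {m : ℕ} (hpq : r < cantorDist p q)
    (hp : ∀ i < m, z i = p i) (hq : ∀ i < m, z i = q i) (hpqm : p m = q m) (hzm : z m ≠ p m) :
    r / 2 ≤ |binMap z - binMap p| ∨ r / 2 ≤ |binMap z - binMap q| := by
  rcases eq_or_ne p q with rfl | hne
  · rw [cantorDist_self] at hpq
    exact .inl (by linarith [abs_nonneg (binMap z - binMap p)])
  set n := PiNat.firstDiff p q
  have hdiff : p n ≠ q n := PiNat.apply_firstDiff_ne hne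
  have hagree : ∀ i < n, p i = q i := fun i hi => PiNat.apply_eq_of_lt_firstDiff hi
  have hmn : m < n := by
    by_contra! hnm
    refine hdiff (hnm.lt_or_eq.elim (fun h => ?_) (· ▸ hpqm))
    exact (hp n h).symm.trans (hq n h)
  have hr : r / 2 < (1 / 2) ^ (n + 1) := by
    have := cantorDist_le_half_pow hagree
    rw [pow_succ]
    linarith
  have hfin : ∀ a b c : Fin 2, a ≠ b → a = c ∨ b = c := by decide
  rcases hfin _ _ (p m) hdiff with h | h
  · exact .inl (hr.le.trans (half_pow_le_abs_binMap_sub hp hzm hmn h))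
  · exact .inr (hr.le.trans (half_pow_le_abs_binMap_sub hq (hpqm ▸ hzm) hmn (h.trans hpqm)))

theorem exists_odd_one_out (v : Fin 3 → Fin 2) (h : ¬ ∀ i j, v i = v j) :
    ∃ k i j, k ≠ i ∧ k ≠ j ∧ i ≠ j ∧ v i = v j ∧ v k ≠ v i := by
  revert v
  decide

/-- the binary-expansion map is 1-Lipschitz and, among any three
points of the Cantor set with mutual distances `> r`, two have images at
distance `≥ r/2`. -/
theorem stmt19 :
    (∀ x y : ℕ → Fin 2, |binMap x - binMap y| ≤ cantorDist x y) ∧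
    (∀ (r : ℝ) (x : Fin 3 → (ℕ → Fin 2)),
      (∀ i j : Fin 3, i ≠ j → cantorDist (x i) (x j) > r) →
      ∃ k m : Fin 3, k ≠ m ∧ |binMap (x k) - binMap (x m)| ≥ r / 2) := by
  refine ⟨abs_binMap_sub_le_cantorDist, fun r x hsep => ?_⟩
  rcases le_or_gt r 0 with hr | hr
  · exact ⟨0, 1, by decide, by linarith [abs_nonneg (binMap (x 0) - binMap (x 1))]⟩
  have hne : x 0 ≠ x 1 := fun h => by
    have := hsep 0 1 (by decide)
    rw [h, cantorDist_self] at this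
    linarith
  have hsplit : ∃ m, ¬ ∀ i j, x i m = x j m :=
    ⟨_, fun h => PiNat.apply_firstDiff_ne hne (h 0 1)⟩
  classical
  have hagree : ∀ l < Nat.find hsplit, ∀ a b, x a l = x b l := fun l hl =>
    not_not.mp (Nat.find_min hsplit hl)
  obtain ⟨k, i, j, hki, hkj, hij, hijm, hkm⟩ := exists_odd_one_out _ (Nat.find_spec hsplit)
  rcases le_abs_binMap_sub_or (hsep i j hij) (fun l hl => hagree l hl k i)
    (fun l hl => hagree l hl k j) hijm hkm with h | h
  exacts [⟨k, i, hki, h⟩, ⟨k, j, hkj, h⟩]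

end Gromov
end
end
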